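/- For all r, s ∈ {1,…,N}, one has ρ_{rs} = ρ̃_{rs}. That is, the coefficients of the quadratic terms in the action of the non-gauged integrable coupled σ-model coincide with the corresponding coefficients of its gauged formulation, so that the gauged action reduces to the non-gauged one under the gauge-fixing g^{(N+1)} = Id. -/

import Mathlib

/-!
The Möbius map `f v = (a v + b)/(c v + d)` sends `z_r ↦ z̃_r`, `ζ^±_i ↦ ζ̃^±_i` and `∞ ↦ a/c`.
Since `f v - f w = (ad - bc)/(cv + d) · (v - w)/(cw + d)` and `f v - a/c = -(ad - bc)/(cv + d)/c`,
the `N` factors of the numerator and the `N` factors of the denominator of `φ̃^r_± (f v)` each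
carry one factor `(ad - bc)/(cv + d)`, and these cancel: `φ̃^r_± (f v) = κ^±_r φ^r_± (v)` with the
constant `κ^±_r = -c ω_± / (c z_r + d)`. Differentiating at `z_r` divides by
`f'(z_r) = (ad - bc)/(c z_r + d)²`, and together with
`z̃_r - z̃_s = (ad - bc)(z_r - z_s)/((c z_r + d)(c z_s + d))` all these factors are compensated
by `ℓ̃^∞ = ℓ^∞ (ad - bc)/(c² ω_+ ω_-)`.
-/

/-- The function `φ^r_±(v) = (v - z_r) φ_±(v)`, where
`φ_±(v) = ∏_i (v - ζ^±_i) / ∏_s (v - z_s)`, with the pole at `z_r` removed so that it is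
defined (and differentiable) at `v = z_r`. -/
noncomputable def phiReg (N : ℕ) (z ζ : Fin N → ℂ) (r : Fin N) (v : ℂ) : ℂ :=
  (∏ i, (v - ζ i)) / ∏ s ∈ Finset.univ.erase r, (v - z s)

/-- The function `φ̃^r_±(v) = (v - z̃_r) φ̃_±(v)`, where
`φ̃_±(v) = ∏_{i≤N} (v - ζ̃^±_i) / ∏_{s≤N+1} (v - z̃_s)`, with the pole at `z̃_r` removed
so that it is defined (and differentiable) at `v = z̃_r`. -/
noncomputable def phiTReg (N : ℕ) (zt : Fin (N + 1) → ℂ) (ζt : Fin N → ℂ) (r : Fin (N + 1))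
    (v : ℂ) : ℂ :=
  (∏ i, (v - ζt i)) / ∏ s ∈ Finset.univ.erase r, (v - zt s)

open Finset

theorem Fin.prod_univ_erase_castSucc {M : Type*} [CommMonoid M] {N : ℕ} (g : Fin (N + 1) → M)
    (r : Fin N) :
    ∏ s ∈ univ.erase r.castSucc, g s = g (Fin.last N) * ∏ s ∈ univ.erase r, g s.castSucc := by
  rw [← one_mul (∏ s ∈ univ.erase r.castSucc, g s), ← sdiff_singleton_eq_erase,
    ← prod_update_of_mem (mem_univ _), Fin.prod_univ_castSucc, ← one_mul (∏ s ∈ univ.erase r, _),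
    ← sdiff_singleton_eq_erase, ← prod_update_of_mem (mem_univ _), mul_comm]
  simp [Function.update_apply, (Fin.castSucc_lt_last r).ne']

theorem deriv_eq_of_comp_eventuallyEq {𝕜 : Type*} [NontriviallyNormedField 𝕜] {F f G : 𝕜 → 𝕜}
    {x f' κ : 𝕜} (hcomp : (fun v => F (f v)) =ᶠ[nhds x] fun v => κ * G v)
    (hF : DifferentiableAt 𝕜 F (f x)) (hf : HasDerivAt f f' x) (hf' : f' ≠ 0) :
    deriv F (f x) = κ * deriv G x / f' := by
  rw [eq_div_iff hf', ← hf.deriv, ← deriv_comp x hF hf.differentiableAt, ← deriv_const_mul_field]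
  exact hcomp.deriv_eq

noncomputable def mobius (a b c d v : ℂ) : ℂ := (a * v + b) / (c * v + d)

section Mobius

variable {a b c d v w : ℂ}

theorem mobius_sub_mobius (hv : c * v + d ≠ 0) (hw : c * w + d ≠ 0) :
    mobius a b c d v - mobius a b c d w
      = (a * d - b * c) / (c * v + d) * ((v - w) / (c * w + d)) := by
  rw [mobius, mobius, div_sub_div _ _ hv hw, div_mul_div_comm]
  ring

theorem mobius_sub_div (hc : c ≠ 0) (hv : c * v + d ≠ 0) :
    mobius a b c d v - a / c = -((a * d - b * c) / (c * v + d) / c) := by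
  rw [mobius, div_sub_div _ _ hv hc, div_div, ← neg_div]
  ring

theorem hasDerivAt_mobius (hv : c * v + d ≠ 0) :
    HasDerivAt (mobius a b c d) ((a * d - b * c) / (c * v + d) ^ 2) v := by
  have hnum : HasDerivAt (fun v => a * v + b) a v := by
    simpa using ((hasDerivAt_id v).const_mul a).add_const b
  have hden : HasDerivAt (fun v => c * v + d) c v := by
    simpa using ((hasDerivAt_id v).const_mul c).add_const d
  exact (hnum.div hden hv).congr_deriv (by ring)

theorem prod_mobius_sub_mobius {ι : Type*} (s : Finset ι) (w : ι → ℂ) (hv : c * v + d ≠ 0)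
    (hw : ∀ i ∈ s, c * w i + d ≠ 0) :
    ∏ i ∈ s, (mobius a b c d v - mobius a b c d (w i))
      = ((a * d - b * c) / (c * v + d)) ^ s.card
        * ((∏ i ∈ s, (v - w i)) / ∏ i ∈ s, (c * w i + d)) := by
  rw [prod_congr rfl fun i hi => mobius_sub_mobius hv (hw i hi), prod_mul_distrib, prod_const,
    prod_div_distrib]

end Mobius

section Transform

variable {N : ℕ} {a b c d : ℂ} {z : Fin N → ℂ} {zt : Fin (N + 1) → ℂ}

theorem prod_erase_castSucc_mobius_sub (hc : c ≠ 0) (hzfin : ∀ r, c * z r + d ≠ 0)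
    (hzt : ∀ r, zt r.castSucc = mobius a b c d (z r)) (hztlast : zt (Fin.last N) = a / c)
    (r : Fin N) {v : ℂ} (hv : c * v + d ≠ 0) :
    ∏ s ∈ univ.erase r.castSucc, (mobius a b c d v - zt s)
      = -(((a * d - b * c) / (c * v + d)) ^ N / c)
        * ((∏ s ∈ univ.erase r, (v - z s)) / ∏ s ∈ univ.erase r, (c * z s + d)) := by
  simp only [Fin.prod_univ_erase_castSucc, hzt, hztlast]
  have hpow : ((a * d - b * c) / (c * v + d)) ^ N
      = ((a * d - b * c) / (c * v + d)) ^ #(univ.erase r) * ((a * d - b * c) / (c * v + d)) := by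
    rw [← pow_succ, card_erase_add_one (mem_univ r), card_univ, Fintype.card_fin]
  rw [mobius_sub_div hc hv, prod_mobius_sub_mobius _ _ hv fun s _ => hzfin s, hpow]
  ring

theorem phiTReg_mobius (hdet : a * d - b * c ≠ 0) (hc : c ≠ 0) (hzfin : ∀ r, c * z r + d ≠ 0)
    {ζ : Fin N → ℂ} (hζfin : ∀ i, c * ζ i + d ≠ 0)
    (hzt : ∀ r, zt r.castSucc = mobius a b c d (z r)) (hztlast : zt (Fin.last N) = a / c)
    (r : Fin N) {v : ℂ} (hv : c * v + d ≠ 0) :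
    phiTReg N zt (fun i => mobius a b c d (ζ i)) r.castSucc (mobius a b c d v)
      = -c * ((∏ s, (c * z s + d)) / ∏ i, (c * ζ i + d)) / (c * z r + d)
        * phiReg N z ζ r v := by
  rw [phiTReg, phiReg, prod_erase_castSucc_mobius_sub hc hzfin hzt hztlast r hv,
    prod_mobius_sub_mobius _ _ hv fun i _ => hζfin i, card_univ, Fintype.card_fin,
    ← prod_erase_mul univ (fun s => c * z s + d) (mem_univ r)]
  field_simp
  rw [mul_div_mul_right _ _ (hzfin r)]

theorem differentiableAt_phiTReg_mobius (hz : Function.Injective z) (hdet : a * d - b * c ≠ 0)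
    (hc : c ≠ 0) (hzfin : ∀ r, c * z r + d ≠ 0)
    (hzt : ∀ r, zt r.castSucc = mobius a b c d (z r)) (hztlast : zt (Fin.last N) = a / c)
    (ζt : Fin N → ℂ) (r : Fin N) :
    DifferentiableAt ℂ (phiTReg N zt ζt r.castSucc) (zt r.castSucc) := by
  have hden : ∏ s ∈ univ.erase r.castSucc, (zt r.castSucc - zt s) ≠ 0 := by
    rw [hzt, prod_erase_castSucc_mobius_sub hc hzfin hzt hztlast r (hzfin r)]
    have hsep : ∏ s ∈ univ.erase r, (z r - z s) ≠ 0 :=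
      prod_ne_zero_iff.mpr fun s hs => sub_ne_zero.mpr (hz.ne (ne_of_mem_erase hs).symm)
    have hzprod : ∏ s ∈ univ.erase r, (c * z s + d) ≠ 0 :=
      prod_ne_zero_iff.mpr fun s _ => hzfin s
    have hμ : (a * d - b * c) / (c * z r + d) ≠ 0 := div_ne_zero hdet (hzfin r)
    exact mul_ne_zero (neg_ne_zero.mpr (div_ne_zero (pow_ne_zero _ hμ) hc))
      (div_ne_zero hsep hzprod)
  unfold phiTReg
  fun_prop (disch := exact hden)

theorem deriv_phiTReg_mobius (hz : Function.Injective z) (hdet : a * d - b * c ≠ 0)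
    (hc : c ≠ 0) (hzfin : ∀ r, c * z r + d ≠ 0) {ζ : Fin N → ℂ} (hζfin : ∀ i, c * ζ i + d ≠ 0)
    (hzt : ∀ r, zt r.castSucc = mobius a b c d (z r)) (hztlast : zt (Fin.last N) = a / c)
    (r : Fin N) :
    deriv (phiTReg N zt (fun i => mobius a b c d (ζ i)) r.castSucc) (mobius a b c d (z r))
      = -c * ((∏ s, (c * z s + d)) / ∏ i, (c * ζ i + d)) / (c * z r + d)
        * deriv (phiReg N z ζ r) (z r) / ((a * d - b * c) / (c * z r + d) ^ 2) := by
  have hdiff := differentiableAt_phiTReg_mobius hz hdet hc hzfin hzt hztlast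
    (fun i => mobius a b c d (ζ i)) r
  rw [hzt] at hdiff
  refine deriv_eq_of_comp_eventuallyEq ?_ hdiff (hasDerivAt_mobius (hzfin r))
    (div_ne_zero hdet (pow_ne_zero _ (hzfin r)))
  have hcont : ContinuousAt (fun v => c * v + d) (z r) := by fun_prop
  filter_upwards [hcont.eventually_ne (hzfin r)] with v hv
  exact phiTReg_mobius hdet hc hzfin hζfin hzt hztlast r hv

end Transform

theorem statement12_general (N : ℕ) (z : Fin N → ℂ) (hz : Function.Injective z)
    (ζp ζm : Fin N → ℂ)
    (linf : ℂ)
    (a b c d : ℝ) (hdet : (a : ℂ) * d - b * c ≠ 0) (hc : (c : ℂ) ≠ 0)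
    (hzfin : ∀ r, (c : ℂ) * z r + d ≠ 0)
    (hζpfin : ∀ i, (c : ℂ) * ζp i + d ≠ 0) (hζmfin : ∀ i, (c : ℂ) * ζm i + d ≠ 0)
    (f : ℂ → ℂ) (hf : ∀ v, f v = ((a : ℂ) * v + b) / ((c : ℂ) * v + d))
    (zt : Fin (N + 1) → ℂ) (hzt : ∀ r : Fin N, zt r.castSucc = f (z r))
    (hztlast : zt (Fin.last N) = (a : ℂ) / c)
    (ωp ωm : ℂ)
    (hωp : ωp = (∏ r, ((c : ℂ) * z r + d)) / ∏ i, ((c : ℂ) * ζp i + d))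
    (hωm : ωm = (∏ r, ((c : ℂ) * z r + d)) / ∏ i, ((c : ℂ) * ζm i + d))
    (ltinf : ℂ)
    (hltinf : ltinf = linf * ((a : ℂ) * d - b * c) / ((c : ℂ) ^ 2 * ωp * ωm))
    (ρ : Fin N → Fin N → ℂ)
    (hρdiag : ∀ r, ρ r r = linf / 4 *
      (deriv (phiReg N z ζp r) (z r) * phiReg N z ζm r (z r)
        - phiReg N z ζp r (z r) * deriv (phiReg N z ζm r) (z r)))
    (hρoff : ∀ r s, r ≠ s →
      ρ r s = linf / 2 * phiReg N z ζp r (z r) * phiReg N z ζm s (z s) / (z r - z s))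
    (ρt : Fin (N + 1) → Fin (N + 1) → ℂ)
    (hρtdiag : ∀ r, ρt r r = ltinf / 4 *
      (deriv (phiTReg N zt (fun i => f (ζp i)) r) (zt r)
          * phiTReg N zt (fun i => f (ζm i)) r (zt r)
        - phiTReg N zt (fun i => f (ζp i)) r (zt r)
          * deriv (phiTReg N zt (fun i => f (ζm i)) r) (zt r)))
    (hρtoff : ∀ r s, r ≠ s →
      ρt r s = ltinf / 2 * phiTReg N zt (fun i => f (ζp i)) r (zt r)
        * phiTReg N zt (fun i => f (ζm i)) s (zt s) / (zt r - zt s)) :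
    ∀ r s : Fin N, ρ r s = ρt r.castSucc s.castSucc := by
  obtain rfl : f = mobius a b c d := funext hf
  have hωp0 : ωp ≠ 0 := hωp ▸ div_ne_zero (prod_ne_zero_iff.mpr fun r _ => hzfin r)
    (prod_ne_zero_iff.mpr fun i _ => hζpfin i)
  have hωm0 : ωm ≠ 0 := hωm ▸ div_ne_zero (prod_ne_zero_iff.mpr fun r _ => hzfin r)
    (prod_ne_zero_iff.mpr fun i _ => hζmfin i)
  have hφp r := phiTReg_mobius hdet hc hzfin hζpfin hzt hztlast r (hzfin r)
  have hφm r := phiTReg_mobius hdet hc hzfin hζmfin hzt hztlast r (hzfin r)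
  have hderivp r := deriv_phiTReg_mobius hz hdet hc hzfin hζpfin hzt hztlast r
  have hderivm r := deriv_phiTReg_mobius hz hdet hc hzfin hζmfin hzt hztlast r
  intro r s
  rcases eq_or_ne r s with rfl | hrs
  · have hwr := hzfin r
    rw [hρdiag, hρtdiag, hzt, hφp, hφm, hderivp, hderivm, ← hωp, ← hωm, hltinf]
    field_simp
  · have hwr := hzfin r
    have hws := hzfin s
    rw [hρoff r s hrs, hρtoff _ _ ((Fin.castSucc_injective N).ne hrs), hzt, hzt, hφp, hφm,
      mobius_sub_mobius (hzfin r) (hzfin s), ← hωp, ← hωm, hltinf]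
    -- keeps `field_simp` from renormalizing these denominators out of reach of `hwr`, `hws`
    generalize (c : ℂ) * z r + d = wr at hwr ⊢
    generalize (c : ℂ) * z s + d = ws at hws ⊢
    field_simp

/-- For all `r, s ∈ {1,…,N}` one has `ρ_{rs} = ρ̃_{rs}`: the coefficients of the quadratic
terms in the action of the non-gauged integrable coupled σ-model coincide with the
corresponding coefficients of its gauged formulation, so that the gauged action reduces to
the non-gauged one under the gauge-fixing `g^{(N+1)} = Id`. -/
theorem statement12 (N : ℕ) (hN : 1 ≤ N) (z : Fin N → ℂ) (hz : Function.Injective z)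
    (ζp ζm : Fin N → ℂ) (hζp : ∀ i r, ζp i ≠ z r) (hζm : ∀ i r, ζm i ≠ z r)
    (linf : ℂ)
    (a b c d : ℝ) (hdet : (a : ℂ) * d - b * c ≠ 0) (hc : (c : ℂ) ≠ 0)
    (hzfin : ∀ r, (c : ℂ) * z r + d ≠ 0)
    (hζpfin : ∀ i, (c : ℂ) * ζp i + d ≠ 0) (hζmfin : ∀ i, (c : ℂ) * ζm i + d ≠ 0)
    (f : ℂ → ℂ) (hf : ∀ v, f v = ((a : ℂ) * v + b) / ((c : ℂ) * v + d))
    (zt : Fin (N + 1) → ℂ) (hzt : ∀ r : Fin N, zt r.castSucc = f (z r))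
    (hztlast : zt (Fin.last N) = (a : ℂ) / c)
    (ωp ωm : ℂ)
    (hωp : ωp = (∏ r, ((c : ℂ) * z r + d)) / ∏ i, ((c : ℂ) * ζp i + d))
    (hωm : ωm = (∏ r, ((c : ℂ) * z r + d)) / ∏ i, ((c : ℂ) * ζm i + d))
    (ltinf : ℂ)
    (hltinf : ltinf = linf * ((a : ℂ) * d - b * c) / ((c : ℂ) ^ 2 * ωp * ωm))
    (ρ : Fin N → Fin N → ℂ)
    (hρdiag : ∀ r, ρ r r = linf / 4 *
      (deriv (phiReg N z ζp r) (z r) * phiReg N z ζm r (z r)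
        - phiReg N z ζp r (z r) * deriv (phiReg N z ζm r) (z r)))
    (hρoff : ∀ r s, r ≠ s →
      ρ r s = linf / 2 * phiReg N z ζp r (z r) * phiReg N z ζm s (z s) / (z r - z s))
    (ρt : Fin (N + 1) → Fin (N + 1) → ℂ)
    (hρtdiag : ∀ r, ρt r r = ltinf / 4 *
      (deriv (phiTReg N zt (fun i => f (ζp i)) r) (zt r)
          * phiTReg N zt (fun i => f (ζm i)) r (zt r)
        - phiTReg N zt (fun i => f (ζp i)) r (zt r)
          * deriv (phiTReg N zt (fun i => f (ζm i)) r) (zt r)))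
    (hρtoff : ∀ r s, r ≠ s →
      ρt r s = ltinf / 2 * phiTReg N zt (fun i => f (ζp i)) r (zt r)
        * phiTReg N zt (fun i => f (ζm i)) s (zt s) / (zt r - zt s)) :
    ∀ r s : Fin N, ρ r s = ρt r.castSucc s.castSucc :=
  statement12_general N z hz ζp ζm linf a b c d hdet hc hzfin hζpfin hζmfin f hf zt hzt hztlast ωp
    ωm hωp hωm ltinf hltinf ρ hρdiag hρoff ρt hρtdiag hρtoff
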